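/- Let G be a connected rooted graph in B(n,α), i.e. with n non-root vertices and at most αn/2 edges. If R_{xρ}(G) > 1 for some vertex x of G, then there is a rooted graph H ∈ B(n,α) with B(H) < B(G). -/

import Mathlib

open scoped ENNReal

set_option linter.unusedSectionVars false

attribute [local instance 10] Classical.propDecidable

/-- A multigraph (parallel edges allowed): a finite edge type with two endpoint maps. -/
structure Multigraph (V : Type) where
  E : Type
  [fE : Fintype E]
  fst : E → V
  snd : E → V

attribute [instance] Multigraph.fE

namespace Multigraph

variable {V : Type} [Fintype V] [DecidableEq V]

/-- The number of edges of a multigraph. -/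
noncomputable def edgeCount (G : Multigraph V) : ℕ := Fintype.card G.E

/-- The net current flowing out of `v` under the current assignment `f`
(the current `f e` flows from `G.fst e` to `G.snd e`). -/
noncomputable def netFlow (G : Multigraph V) (f : G.E → ℝ) (v : V) : ℝ :=
  ∑ e : G.E, ((if G.fst e = v then f e else 0) - (if G.snd e = v then f e else 0))

/-- A unit flow from `x` to `y`: Kirchhoff's current law holds at every vertex other
than `x` and `y`, and the net current out of `x` is `1`. -/
def IsUnitFlow (G : Multigraph V) (x y : V) (f : G.E → ℝ) : Prop :=
  G.netFlow f x = 1 ∧ ∀ v : V, v ≠ x → v ≠ y → G.netFlow f v = 0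

/-- The effective resistance between `x` and `y`: the least energy `∑ e, (I e)^2` of a
unit flow from `x` to `y` (`∞` if there is no such flow, `0` if `x = y`). -/
noncomputable def effRes (G : Multigraph V) (x y : V) : ℝ≥0∞ :=
  if x = y then 0
  else ⨅ f : {f : G.E → ℝ // G.IsUnitFlow x y f}, ENNReal.ofReal (∑ e : G.E, (f.1 e) ^ 2)

/-- Adjacency in a multigraph. -/
def Adj (G : Multigraph V) (u v : V) : Prop :=
  ∃ e : G.E, (G.fst e = u ∧ G.snd e = v) ∨ (G.fst e = v ∧ G.snd e = u)

/-- A multigraph is connected if every vertex is reachable from every other. -/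
def Connected (G : Multigraph V) : Prop :=
  ∀ u v : V, Relation.ReflTransGen G.Adj u v

/-- The degree of a vertex (loops count twice). -/
noncomputable def degree (G : Multigraph V) (v : V) : ℕ :=
  (Finset.univ.filter fun e : G.E => G.fst e = v).card +
    (Finset.univ.filter fun e : G.E => G.snd e = v).card

/-- The number of leaves (vertices of degree 1). -/
noncomputable def leafCount (G : Multigraph V) : ℕ :=
  (Finset.univ.filter fun v : V => G.degree v = 1).card

/-- `A(G)`: the average effective resistance over unordered pairs of distinct vertices. -/
noncomputable def avgPairRes (G : Multigraph V) : ℝ≥0∞ :=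
  (∑ x : V, ∑ y : V, G.effRes x y) / (2 * ((Fintype.card V).choose 2 : ℝ≥0∞))

/-- `A'(G)`: the average effective resistance over ordered pairs of vertices. -/
noncomputable def avgOrdRes (G : Multigraph V) : ℝ≥0∞ :=
  (∑ x : V, ∑ y : V, G.effRes x y) / ((Fintype.card V : ℝ≥0∞) ^ 2)

/-- The total effective resistance to the root `ρ`. -/
noncomputable def Rtot (G : Multigraph V) (ρ : V) : ℝ≥0∞ := ∑ x : V, G.effRes ρ x

/-- `B(G)`: the average resistance of a non-root vertex to the root `ρ`. -/
noncomputable def rootedAvg (G : Multigraph V) (ρ : V) : ℝ≥0∞ :=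
  G.Rtot ρ / ((Fintype.card V - 1 : ℕ) : ℝ≥0∞)

/-- A tree: a connected multigraph with one more vertex than edge. -/
def IsTree (G : Multigraph V) : Prop := G.Connected ∧ G.edgeCount + 1 = Fintype.card V

/-- `v` is within distance `ℓ` of `x` (there is a lazy walk of length `ℓ` from `x` to `v`). -/
def WithinDist (G : Multigraph V) (ℓ : ℕ) (x v : V) : Prop :=
  ∃ p : ℕ → V, p 0 = x ∧ p ℓ = v ∧ ∀ i, i < ℓ → p i = p (i + 1) ∨ G.Adj (p i) (p (i + 1))

end Multigraph

open Multigraph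

/-- `b_n(α)`: the least value of `B(G)` over rooted graphs with `n` non-root vertices
and at most `αn/2` edges (the root may be any vertex). -/
noncomputable def bFun (n : ℕ) (α : ℝ) : ℝ≥0∞ :=
  ⨅ G : {p : Multigraph (Fin (n + 1)) × Fin (n + 1) // (p.1.edgeCount : ℝ) ≤ α * n / 2},
    rootedAvg G.1.1 G.1.2

/-- `a_n(α)`: the least value of `A'(G)` over graphs with `n` vertices and at most
`αn/2` edges. -/
noncomputable def aFun (n : ℕ) (α : ℝ) : ℝ≥0∞ :=
  ⨅ G : {G : Multigraph (Fin n) // (G.edgeCount : ℝ) ≤ α * n / 2}, avgOrdRes G.1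

/-- `G_S`: add a new root vertex `Fin.last n` joined by one edge to each entry of the
`s`-tuple (multiset) `S`. -/
noncomputable def addRoot {n : ℕ} (G : Multigraph (Fin n)) {s : ℕ} (S : Fin s → Fin n) :
    Multigraph (Fin (n + 1)) where
  E := G.E ⊕ Fin s
  fst := Sum.elim (fun e => (G.fst e).castSucc) fun _ => Fin.last n
  snd := Sum.elim (fun e => (G.snd e).castSucc) fun i => (S i).castSucc

section Trees

variable {V : Type} [Fintype V] [DecidableEq V]

/-- The map identifying all leaves of `T` to the single new vertex `Sum.inr ()`. -/
noncomputable def leafId (T : Multigraph V) (v : V) : V ⊕ Unit :=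
  if T.degree v = 1 then Sum.inr () else Sum.inl v

/-- The multigraph obtained from `T` by identifying all its leaves to one vertex. -/
noncomputable def identifyLeaves (T : Multigraph V) : Multigraph (V ⊕ Unit) where
  E := T.E
  fst := fun e => leafId T (T.fst e)
  snd := fun e => leafId T (T.snd e)

/-- `R(x,T)`: the effective resistance between `x` and the vertex obtained by
identifying all the leaves of `T`. -/
noncomputable def treeRes (T : Multigraph V) (x : V) : ℝ≥0∞ :=
  (identifyLeaves T).effRes (leafId T x) (Sum.inr ())

/-- The rooted graph formed from `T` and a set `S` of sinks: add a root `Sum.inr ()`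
joined to each `v ∈ S` by `degree v - 1` parallel edges. -/
noncomputable def randRooted (T : Multigraph V) (S : Finset V) : Multigraph (V ⊕ Unit) where
  E := T.E ⊕ (Σ v : {v : V // v ∈ S}, Fin (T.degree v.1 - 1))
  fst := Sum.elim (fun e => Sum.inl (T.fst e)) fun p => Sum.inl p.1.1
  snd := Sum.elim (fun e => Sum.inl (T.snd e)) fun _ => Sum.inr ()

/-- The subgraph induced on the vertices satisfying `P`. -/
noncomputable def inducedSub (G : Multigraph V) (P : V → Prop) : Multigraph {v : V // P v} where
  E := {e : G.E // P (G.fst e) ∧ P (G.snd e)}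
  fst := fun e => ⟨G.fst e.1, e.2.1⟩
  snd := fun e => ⟨G.snd e.1, e.2.2⟩

lemma withinDist_self (G : Multigraph V) (ℓ : ℕ) (x : V) : G.WithinDist ℓ x x :=
  ⟨fun _ => x, rfl, rfl, fun _ _ => Or.inl rfl⟩

/-- `R(x, T_x)` where `T_x` is the subgraph of `G` induced by the vertices within
distance `ℓ` of `x`. -/
noncomputable def localRes (G : Multigraph V) (ℓ : ℕ) (x : V) : ℝ≥0∞ :=
  treeRes (inducedSub G (G.WithinDist ℓ x)) ⟨x, withinDist_self G ℓ x⟩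

/-- cyclic successor on `Fin k` -/
def cycSucc {k : ℕ} (i : Fin k) : Fin k :=
  ⟨(i.1 + 1) % k, Nat.mod_lt _ (Nat.lt_of_le_of_lt (Nat.zero_le i.1) i.isLt)⟩

/-- `G` contains a cycle with `k` (distinct) vertices and `k` distinct edges. -/
def HasCycleLength (G : Multigraph V) (k : ℕ) : Prop :=
  0 < k ∧ ∃ (v : Fin k → V) (e : Fin k → G.E), Function.Injective v ∧ Function.Injective e ∧
    ∀ i : Fin k, (G.fst (e i) = v i ∧ G.snd (e i) = v (cycSucc i)) ∨
      (G.fst (e i) = v (cycSucc i) ∧ G.snd (e i) = v i)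

/-- `G⁺/x`: delete the two edges `e₁, e₂` at the degree-2 vertex `x`, add an edge
`y₁y₂` (contracting `y₁x`), and reuse `x` as a new leaf attached to the root `ρ`. -/
noncomputable def contractPlus (G : Multigraph V) (x ρ : V) (e₁ e₂ : G.E) (y₁ y₂ : V) :
    Multigraph V where
  E := {e : G.E // e ≠ e₁ ∧ e ≠ e₂} ⊕ Fin 2
  fst := Sum.elim (fun e => G.fst e.1) fun i => if i = 0 then y₁ else x
  snd := Sum.elim (fun e => G.snd e.1) fun i => if i = 0 then y₂ else ρ

end Trees

/-- A Queen-Bee network: every non-root vertex is joined to the root. -/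
def QueenBee {n : ℕ} (G : Multigraph (Fin (n + 1))) (ρ : Fin (n + 1)) : Prop :=
  ∀ v : Fin (n + 1), v ≠ ρ → G.Adj ρ v

section Weighted

variable {V : Type} [Fintype V] [DecidableEq V]

/-- A unit flow from `x` to `y` in a weighted network with conductances `c`:
antisymmetric, zero on edges of zero conductance, and satisfying Kirchhoff's
current law away from `x` and `y`, with net current `1` out of `x`. -/
def IsWUnitFlow (c : V → V → ℝ) (x y : V) (f : V → V → ℝ) : Prop :=
  (∀ u v, f u v = - f v u) ∧ (∀ u v, c u v = 0 → f u v = 0) ∧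
    (∑ v : V, f x v) = 1 ∧ ∀ u : V, u ≠ x → u ≠ y → (∑ v : V, f u v) = 0

/-- The effective resistance between `x` and `y` in the weighted network with
conductances `c`: the least energy `∑_{uv} I_{uv}²/c_{uv}` of a unit flow. -/
noncomputable def weffRes (c : V → V → ℝ) (x y : V) : ℝ≥0∞ :=
  if x = y then 0
  else ⨅ f : {f : V → V → ℝ // IsWUnitFlow c x y f},
    ENNReal.ofReal ((1 / 2) * ∑ u : V, ∑ v : V, (f.1 u v) ^ 2 / c u v)

end Weighted

/-! Let `e` be an edge from `x` to a neighbour `z`. Identify `x` with `z` and reuse `e` as a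
pendant edge joining the root to the now isolated vertex `x`. Identifying vertices and
moving a loop never increase an effective resistance, because every unit flow of the old
graph is a unit flow of the new one of no larger energy. Hence every vertex other than `x`
keeps at most its old resistance to the root, while `x` drops from above `1` to at most `1`;
the number of edges is unchanged, and connectivity keeps all resistances finite, so the
total resistance to the root strictly decreases. -/

namespace Multigraph

section Flows

variable {V : Type} [Fintype V] [DecidableEq V] (G : Multigraph V) {a b c : V} {f g : G.E → ℝ}

lemma netFlow_add (f g : G.E → ℝ) (v : V) :
    G.netFlow (f + g) v = G.netFlow f v + G.netFlow g v := by
  simp only [netFlow, Pi.add_apply, ← Finset.sum_add_distrib]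
  refine Finset.sum_congr rfl fun e _ => ?_
  split_ifs <;> ring

lemma netFlow_neg (f : G.E → ℝ) (v : V) : G.netFlow (-f) v = -G.netFlow f v := by
  simp only [netFlow, Pi.neg_apply, ← Finset.sum_neg_distrib]
  refine Finset.sum_congr rfl fun e _ => ?_
  split_ifs <;> ring

lemma sum_netFlow (f : G.E → ℝ) : ∑ v, G.netFlow f v = 0 := by
  simp [netFlow, Finset.sum_comm (γ := V), Finset.sum_sub_distrib]

lemma netFlow_single {e : G.E} (v : V) :
    G.netFlow (Pi.single e 1) v =
      (if G.fst e = v then 1 else 0) - (if G.snd e = v then 1 else 0) := by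
  rw [netFlow, Finset.sum_eq_single e (fun e' _ h => by simp [h]) (by simp)]
  simp

lemma IsUnitFlow.netFlow_target (hf : G.IsUnitFlow a b f) (hab : a ≠ b) :
    G.netFlow f b = -1 := by
  have hsum := G.sum_netFlow f
  rw [Fintype.sum_eq_add a b hab fun v ⟨hva, hvb⟩ => hf.2 v hva hvb, hf.1] at hsum
  linarith

lemma IsUnitFlow.neg (hf : G.IsUnitFlow a b f) (hab : a ≠ b) : G.IsUnitFlow b a (-f) := by
  refine ⟨by rw [netFlow_neg, hf.netFlow_target G hab, neg_neg], fun v hvb hva => ?_⟩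
  rw [netFlow_neg, hf.2 v hva hvb, neg_zero]

lemma IsUnitFlow.add (hf : G.IsUnitFlow a b f) (hg : G.IsUnitFlow b c g) (hab : a ≠ b)
    (hac : a ≠ c) : G.IsUnitFlow a c (f + g) := by
  refine ⟨by rw [netFlow_add, hf.1, hg.2 a hab hac, add_zero], fun v hva hvc => ?_⟩
  rw [netFlow_add]
  rcases eq_or_ne v b with rfl | hvb
  · rw [hf.netFlow_target G hab, hg.1, neg_add_cancel]
  · rw [hf.2 v hva hvb, hg.2 v hvb hvc, add_zero]

lemma isUnitFlow_single {e : G.E} (ha : G.fst e = a) (hb : G.snd e = b) (hab : a ≠ b) :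
    G.IsUnitFlow a b (Pi.single e 1) := by
  refine ⟨by simp [netFlow_single, ha, hb, hab.symm], fun v hva hvb => ?_⟩
  simp [netFlow_single, ha, hb, hva.symm, hvb.symm]

lemma exists_isUnitFlow_of_adj (h : G.Adj a b) (hab : a ≠ b) : ∃ f, G.IsUnitFlow a b f := by
  obtain ⟨e, ⟨ha, hb⟩ | ⟨hb, ha⟩⟩ := h
  exacts [⟨_, G.isUnitFlow_single ha hb hab⟩,
    ⟨_, (G.isUnitFlow_single hb ha hab.symm).neg G hab.symm⟩]

lemma exists_isUnitFlow_of_reflTransGen (h : Relation.ReflTransGen G.Adj a b) (hab : a ≠ b) :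
    ∃ f, G.IsUnitFlow a b f := by
  induction h with
  | refl => exact absurd rfl hab
  | @tail b c _ hbc ih =>
    rcases eq_or_ne a b with rfl | hab'
    · exact G.exists_isUnitFlow_of_adj hbc hab
    rcases eq_or_ne b c with rfl | hbc'
    · exact ih hab
    obtain ⟨f, hf⟩ := ih hab'
    obtain ⟨g, hg⟩ := G.exists_isUnitFlow_of_adj hbc hbc'
    exact ⟨f + g, hf.add G hg hab' hab⟩

end Flows

section Resistance

variable {V : Type} [Fintype V] [DecidableEq V] (G : Multigraph V) {a b : V}

@[simp]
lemma effRes_self (a : V) : G.effRes a a = 0 := if_pos rfl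

lemma effRes_le_ofReal {f : G.E → ℝ} (hf : G.IsUnitFlow a b f) :
    G.effRes a b ≤ ENNReal.ofReal (∑ e, f e ^ 2) := by
  unfold effRes
  split_ifs
  · exact zero_le
  · exact iInf_le_of_le ⟨f, hf⟩ le_rfl

lemma effRes_le_of_forall_isUnitFlow {W : Type} [Fintype W] [DecidableEq W] {H : Multigraph W}
    {a' b' : W} (hab : a ≠ b)
    (h : ∀ f, G.IsUnitFlow a b f → ∃ g, H.IsUnitFlow a' b' g ∧ ∑ e, g e ^ 2 ≤ ∑ e, f e ^ 2) :
    H.effRes a' b' ≤ G.effRes a b := by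
  rw [show G.effRes a b = _ from if_neg hab]
  refine le_iInf fun ⟨f, hf⟩ => ?_
  obtain ⟨g, hg, hle⟩ := h f hf
  exact (H.effRes_le_ofReal hg).trans (ENNReal.ofReal_le_ofReal hle)

lemma effRes_comm (a b : V) : G.effRes a b = G.effRes b a := by
  have swap_le : ∀ a b, G.effRes a b ≤ G.effRes b a := fun a b => by
    rcases eq_or_ne b a with rfl | hba
    · rfl
    exact G.effRes_le_of_forall_isUnitFlow hba fun f hf => ⟨-f, hf.neg G hba, by simp⟩
  exact le_antisymm (swap_le a b) (swap_le b a)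

lemma effRes_le_one {e : G.E} (ha : G.fst e = a) (hb : G.snd e = b) : G.effRes a b ≤ 1 := by
  rcases eq_or_ne a b with rfl | hab
  · simp
  refine (G.effRes_le_ofReal (G.isUnitFlow_single ha hb hab)).trans ?_
  simp [Pi.single_apply, ite_pow]

lemma effRes_ne_top_of_reflTransGen (h : Relation.ReflTransGen G.Adj a b) : G.effRes a b ≠ ∞ := by
  rcases eq_or_ne a b with rfl | hab
  · simp
  obtain ⟨f, hf⟩ := G.exists_isUnitFlow_of_reflTransGen h hab
  exact ne_top_of_le_ne_top ENNReal.ofReal_ne_top (G.effRes_le_ofReal hf)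

end Resistance

section Operations

variable {V W : Type} [Fintype V] [DecidableEq V] [Fintype W] [DecidableEq W]
  (G : Multigraph V) {a b : V}

noncomputable def map (φ : V → W) : Multigraph W where
  E := G.E
  fst := φ ∘ G.fst
  snd := φ ∘ G.snd

noncomputable def reattach (e₀ : G.E) (u v : V) : Multigraph V where
  E := G.E
  fst := Function.update G.fst e₀ u
  snd := Function.update G.snd e₀ v

lemma netFlow_map (φ : V → W) (f : G.E → ℝ) (w : W) :
    (G.map φ).netFlow f w = ∑ v with φ v = w, G.netFlow f v := by
  simp only [netFlow]
  rw [Finset.sum_comm]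
  exact Finset.sum_congr rfl fun e _ => by simp [Finset.sum_sub_distrib, Finset.sum_ite_eq]; rfl

lemma IsUnitFlow.map {φ : V → W} {f : G.E → ℝ} (hf : G.IsUnitFlow a b f) (hab : φ a ≠ φ b) :
    (G.map φ).IsUnitFlow (φ a) (φ b) f := by
  have hb : ∀ v, φ v = φ a → v ≠ b := by rintro v hv rfl; exact hab hv.symm
  refine ⟨?_, fun w hwa hwb => ?_⟩
  · rw [netFlow_map, Finset.sum_eq_single_of_mem a (by simp), hf.1]
    exact fun v hv hva => hf.2 v hva (hb v (Finset.mem_filter.1 hv).2)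
  · rw [netFlow_map]
    refine Finset.sum_eq_zero fun v hv => hf.2 v ?_ ?_ <;> rintro rfl
    exacts [hwa (Finset.mem_filter.1 hv).2.symm, hwb (Finset.mem_filter.1 hv).2.symm]

lemma effRes_map_le (φ : V → W) (hab : φ a ≠ φ b) :
    (G.map φ).effRes (φ a) (φ b) ≤ G.effRes a b :=
  G.effRes_le_of_forall_isUnitFlow (ne_of_apply_ne φ hab) fun f hf => ⟨f, hf.map G hab, le_rfl⟩

lemma netFlow_reattach_of_loop {e₀ : G.E} (hloop : G.fst e₀ = G.snd e₀) (u v : V)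
    (f : G.E → ℝ) (w : V) :
    (G.reattach e₀ u v).netFlow (Function.update f e₀ 0 : G.E → ℝ) w = G.netFlow f w := by
  refine Finset.sum_congr rfl fun (e : G.E) _ => ?_
  by_cases he : e = e₀ <;> simp [reattach, he, hloop]

lemma effRes_reattach_le_of_loop {e₀ : G.E} (hloop : G.fst e₀ = G.snd e₀) (u v a b : V) :
    (G.reattach e₀ u v).effRes a b ≤ G.effRes a b := by
  rcases eq_or_ne a b with rfl | hab
  · simp
  refine G.effRes_le_of_forall_isUnitFlow hab fun f hf =>
    ⟨(Function.update f e₀ 0 : G.E → ℝ), ?_, ?_⟩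
  · simpa only [IsUnitFlow, G.netFlow_reattach_of_loop hloop] using hf
  · refine Finset.sum_le_sum fun (e : G.E) _ => ?_
    by_cases he : e = e₀ <;> simp [he, sq_nonneg]

noncomputable def contractHang (e : G.E) (x z ρ : V) : Multigraph V :=
  (G.map (Function.update id x z)).reattach e ρ x

lemma effRes_contractHang_le {e : G.E} {x z ρ y : V}
    (he : (G.fst e = x ∧ G.snd e = z) ∨ (G.fst e = z ∧ G.snd e = x)) (hρx : ρ ≠ x)
    (hyx : y ≠ x) : (G.contractHang e x z ρ).effRes ρ y ≤ G.effRes ρ y := by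
  set φ := Function.update id x z
  rcases eq_or_ne ρ y with rfl | hρy
  · simp
  have hloop : (G.map φ).fst e = (G.map φ).snd e := by
    rcases he with ⟨h1, h2⟩ | ⟨h1, h2⟩ <;> simp [map, φ, h1, h2, Function.update_apply]
  calc (G.contractHang e x z ρ).effRes ρ y ≤ (G.map φ).effRes ρ y :=
        (G.map φ).effRes_reattach_le_of_loop hloop _ _ _ _
    _ = (G.map φ).effRes (φ ρ) (φ y) := by simp [φ, hρx, hyx]
    _ ≤ G.effRes ρ y := G.effRes_map_le φ (by simpa [φ, hρx, hyx] using hρy)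

lemma effRes_contractHang_le_one (e : G.E) (x z ρ : V) :
    (G.contractHang e x z ρ).effRes ρ x ≤ 1 :=
  effRes_le_one _ (e := e) (by simp only [contractHang, reattach]; exact Function.update_self ..)
    (by simp only [contractHang, reattach]; exact Function.update_self ..)

end Operations

section RootedAverage

variable {V : Type} [Fintype V] [DecidableEq V] {G H : Multigraph V} {ρ x : V}

lemma Rtot_lt_Rtot (hfin : ∀ y, G.effRes ρ y ≠ ∞)
    (hle : ∀ y, y ≠ x → H.effRes ρ y ≤ G.effRes ρ y) (hlt : H.effRes ρ x < G.effRes ρ x) :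
    H.Rtot ρ < G.Rtot ρ := by
  have hsum_le :
      ∑ y ∈ Finset.univ.erase x, H.effRes ρ y ≤ ∑ y ∈ Finset.univ.erase x, G.effRes ρ y :=
    Finset.sum_le_sum fun y hy => hle y (Finset.ne_of_mem_erase hy)
  rw [Rtot, Rtot, ← Finset.sum_erase_add _ _ (Finset.mem_univ x),
    ← Finset.sum_erase_add _ _ (Finset.mem_univ x)]
  exact ENNReal.add_lt_add_of_le_of_lt
    (ne_top_of_le_ne_top (ENNReal.sum_ne_top.2 fun y _ => hfin y) hsum_le) hsum_le hlt

lemma rootedAvg_lt_rootedAvg (hV : 1 < Fintype.card V) (h : H.Rtot ρ < G.Rtot ρ) :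
    H.rootedAvg ρ < G.rootedAvg ρ :=
  ENNReal.div_lt_div_right (Nat.cast_ne_zero.2 (by omega)) (ENNReal.natCast_ne_top _) h

end RootedAverage

end Multigraph

/-- **Lemma (contracting a high-resistance vertex).** If `G` is a connected rooted graph
with `n` non-root vertices and at most `αn/2` edges and some vertex `x` has
`R_{xρ}(G) > 1`, then there is a rooted graph `H` in the same class with `B(H) < B(G)`. -/
theorem stmt4 (n : ℕ) (α : ℝ) (G : Multigraph (Fin (n + 1))) (ρ : Fin (n + 1))
    (hconn : G.Connected) (hm : (G.edgeCount : ℝ) ≤ α * n / 2)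
    (x : Fin (n + 1)) (hx : 1 < G.effRes x ρ) :
    ∃ (H : Multigraph (Fin (n + 1))) (σ : Fin (n + 1)),
      (H.edgeCount : ℝ) ≤ α * n / 2 ∧ rootedAvg H σ < rootedAvg G ρ := by
  have hxρ : x ≠ ρ := by
    rintro rfl
    simp at hx
  obtain ⟨z, ⟨e, he⟩, -⟩ := (hconn x ρ).cases_head.resolve_left hxρ
  refine ⟨G.contractHang e x z ρ, ρ, hm, rootedAvg_lt_rootedAvg ?_ ?_⟩
  · exact Fintype.one_lt_card_iff.2 ⟨x, ρ, hxρ⟩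
  refine Rtot_lt_Rtot (fun y => G.effRes_ne_top_of_reflTransGen (hconn ρ y))
    (fun y hy => G.effRes_contractHang_le he hxρ.symm hy) ?_
  calc (G.contractHang e x z ρ).effRes ρ x ≤ 1 := G.effRes_contractHang_le_one e x z ρ
    _ < G.effRes x ρ := hx
    _ = G.effRes ρ x := G.effRes_comm x ρ
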